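/- (Lemma A.2, decomposition of the particle approximation error.) Assume (A1), let ν ≪ ς with νg(y₀) := ∫ g(x, y₀) ν(dx) > 0 and W₀(x) := g(x, y₀) dν/dς(x), and let R₀, …, R_{n−1} be Markov kernels on X with Q(x, ·) ≪ R_{k}(x, ·) and W_{k+1}(x, x') := g(x', y_{k+1}) dQ(x, ·)/dR_{k}(x, ·)(x'), where Q(x, A) := ∫_A q(x, x') μ(dx'). For each 0 ≤ k ≤ n let ξ^{k,1}, …, ξ^{k,N} ∈ X^{k+1} be points such that the weights ω_0^i := W₀(ξ^{0,i}) and ω_k^i := W_k(ξ^{k,i}(k−1), ξ^{k,i}(k)) (k ≥ 1) are all strictly positive, and set φ^N_{0:k|k} := Σ_j ω_k^j δ_{ξ^{k,j}} / Σ_j ω_k^j. For 1 ≤ k ≤ n define h_k(x_{0:k}) := W_k(x_{k−1}, x_k) L_k⋯L_{n−1}(x_k, X^{n+1}) / φ^N_{0:k−1|k−1} L_{k−1}⋯L_{n−1}(X^{n+1}) and the measure μ^N_{k|n}(A) := ∫_A h_k(x_{0:k}) η^N_k(dx_{0:k}) where η^N_k := φ^N_{0:k−1|k−1} R^p_{k−1}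 and R^p_{k−1} is the path-extension kernel R^p_{k−1}(x_{0:k−1}, f) := ∫_X f(x_{0:k−1}, x_k) R_{k−1}(x_{k−1}, dx_k); define h_0(x₀) := W₀(x₀) L_0⋯L_{n−1}(x₀, X^{n+1}) / ν[g(·, y₀) L_0⋯L_{n−1}(X^{n+1})] and μ_{0|n}(A) := ∫_A h_0(x₀) ς(dx₀). For fixed reference points x̂_{0:k} ∈ X^{k+1} define Ψ_{k,n}[f](x_{0:k}) := L_k⋯L_{n−1} f(x_{0:k}) / L_k⋯L_{n−1}(x_{0:k}, X^{n+1}) − L_k⋯L_{n−1} f(x̂_{0:k}) / L_k⋯L_{n−1}(x̂_{0:k}, X^{n+1}). Then for every bounded measurable f on X^{n+1}, φ^N_{0:n|n} f − φ_{ν,0:n|n} f = Σ_{k=0}^n φ_k^N(f), where for k ≥ 1, φ_k^N(f) := [Σ_{i=1}^N h_k(ξ^{k,i}) Ψ_{k,n}[f](ξ^{k,i})] / [Σ_{j=1}^N h_k(ξ^{k,j})] − μ^N_{k|n} Ψ_{k,n}[f], and φ_0^N(f) := [Σ_{i=1}^N h_0(ξ^{0,i}) Ψ_{0,n}[f](ξ^{0,i})]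 / [Σ_{j=1}^N h_0(ξ^{0,j})] − μ_{0|n} Ψ_{0,n}[f]. -/
import Mathlib


/- Lemma A.2 of Olsson, Cappé, Douc, Moulines: decomposition of the particle
approximation error. For a weighted particle system `{(ξ^{k,i}, ω_k^i)}`
(with importance weights `W₀ = g dν/dς`, `W_k = g dQ/dR_{k−1}`), one has
`φ^N_{0:n|n} f − φ_{ν,0:n|n} f = Σ_{k=0}^n φ_k^N(f)`, where each `φ_k^N(f)` is
the difference between a self-normalized importance sampling estimate of
`μ^N_{k|n} Ψ_{k,n}[f]` and its exact value. -/

open MeasureTheory ProbabilityTheory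

noncomputable section

variable {X : Type*} [MeasurableSpace X] {Y : Type*} {N : ℕ}

/-- `LF μ q g ys n m f x` is the iterated unnormalized smoothing operator
`(L_{n-m} ⋯ L_{n-1} f)(x_{0:n-m})`, paths being represented as elements of `ℕ → X`. -/
def LF (μ : Measure X) (q : X → X → ℝ) (g : X → Y → ℝ) (ys : ℕ → Y) (n : ℕ) :
    ℕ → ((ℕ → X) → ℝ) → (ℕ → X) → ℝ
  | 0, f, x => f x
  | m + 1, f, x =>
      ∫ x', g x' (ys (n - m)) * q (x (n - m - 1)) x' *
        LF μ q g ys n m f (Function.update x (n - m) x') ∂μ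

/-- The total mass `L_k ⋯ L_{n-1}(x_k, X^{n+1})`. -/
def Lmass (μ : Measure X) (q : X → X → ℝ) (g : X → Y → ℝ) (ys : ℕ → Y) (n k : ℕ) (xk : X) : ℝ :=
  LF μ q g ys n (n - k) (fun _ => 1) (fun _ => xk)

/-- `smoothExp μ ν q g ys n f = φ_{ν,0:n|n} f`, the expectation of `f` under
the joint smoothing distribution. -/
def smoothExp (μ ν : Measure X) (q : X → X → ℝ) (g : X → Y → ℝ) (ys : ℕ → Y)
    (n : ℕ) (f : (ℕ → X) → ℝ) : ℝ :=
  (∫ x₀, g x₀ (ys 0) * LF μ q g ys n n f (fun _ => x₀) ∂ν) /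
    ∫ x₀, g x₀ (ys 0) * LF μ q g ys n n (fun _ => 1) (fun _ => x₀) ∂ν

/-- `Ψ_{k,n}[f]` with reference point `xhat`. -/
def Psi (μ : Measure X) (q : X → X → ℝ) (g : X → Y → ℝ) (ys : ℕ → Y) (n k : ℕ)
    (xhat : ℕ → X) (f : (ℕ → X) → ℝ) (x : ℕ → X) : ℝ :=
  LF μ q g ys n (n - k) f x / LF μ q g ys n (n - k) (fun _ => 1) x -
    LF μ q g ys n (n - k) f xhat / LF μ q g ys n (n - k) (fun _ => 1) xhat

/-- The importance weight `ω_k^i` of particle `i` at time `k`. -/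
def partW (W0 : X → ℝ) (W : ℕ → X → X → ℝ) (ξ : ℕ → Fin N → ℕ → X) : ℕ → Fin N → ℝ
  | 0, i => W0 (ξ 0 i 0)
  | k + 1, i => W (k + 1) (ξ (k + 1) i k) (ξ (k + 1) i (k + 1))

/-- The weighted particle approximation `φ^N_{0:k|k} f`. -/
def partMeas (W0 : X → ℝ) (W : ℕ → X → X → ℝ) (ξ : ℕ → Fin N → ℕ → X)
    (k : ℕ) (f : (ℕ → X) → ℝ) : ℝ :=
  (∑ j, partW W0 W ξ k j * f (ξ k j)) / ∑ j, partW W0 W ξ k j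

/-- The Radon–Nikodým derivative `h_k = dμ^N_{k|n}/dη^N_k` (for `k ≥ 1`) and
`h_0 = dμ_{0|n}/dς`. -/
def hfun (μ ν : Measure X) (q : X → X → ℝ) (g : X → Y → ℝ) (ys : ℕ → Y) (n : ℕ)
    (W0 : X → ℝ) (W : ℕ → X → X → ℝ) (ξ : ℕ → Fin N → ℕ → X) : ℕ → (ℕ → X) → ℝ
  | 0, x => W0 (x 0) * Lmass μ q g ys n 0 (x 0) /
      ∫ z, g z (ys 0) * Lmass μ q g ys n 0 z ∂ν
  | k + 1, x =>
      W (k + 1) (x k) (x (k + 1)) * Lmass μ q g ys n (k + 1) (x (k + 1)) /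
        partMeas W0 W ξ k (fun xp => Lmass μ q g ys n k (xp k))

/-- The `k`-th term `φ_k^N(f)` of the error decomposition: the difference
between the self-normalized importance sampling estimate of
`μ^N_{k|n} Ψ_{k,n}[f]` based on the `N` particles at time `k` and the exact
value `μ^N_{k|n} Ψ_{k,n}[f]` (resp. `μ_{0|n} Ψ_{0,n}[f]` for `k = 0`). -/
def phiK (μ ν ς : Measure X) (q : X → X → ℝ) (g : X → Y → ℝ) (ys : ℕ → Y) (n : ℕ)
    (W0 : X → ℝ) (W : ℕ → X → X → ℝ) (R : ℕ → Kernel X X)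
    (ξ : ℕ → Fin N → ℕ → X) (xhat : ℕ → ℕ → X) : ℕ → ((ℕ → X) → ℝ) → ℝ
  | 0, f =>
      (∑ i, hfun μ ν q g ys n W0 W ξ 0 (ξ 0 i) *
            Psi μ q g ys n 0 (xhat 0) f (ξ 0 i)) /
          (∑ j, hfun μ ν q g ys n W0 W ξ 0 (ξ 0 j)) -
        ∫ x₀, hfun μ ν q g ys n W0 W ξ 0 (fun _ => x₀) *
          Psi μ q g ys n 0 (xhat 0) f (fun _ => x₀) ∂ς
  | k + 1, f =>
      (∑ i, hfun μ ν q g ys n W0 W ξ (k + 1) (ξ (k + 1) i) *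
            Psi μ q g ys n (k + 1) (xhat (k + 1)) f (ξ (k + 1) i)) /
          (∑ j, hfun μ ν q g ys n W0 W ξ (k + 1) (ξ (k + 1) j)) -
        ∑ j, (partW W0 W ξ k j / ∑ j', partW W0 W ξ k j') *
          ∫ x', hfun μ ν q g ys n W0 W ξ (k + 1) (Function.update (ξ k j) (k + 1) x') *
            Psi μ q g ys n (k + 1) (xhat (k + 1)) f (Function.update (ξ k j) (k + 1) x')
            ∂(R k (ξ k j k))


section auxlemmas

open scoped NNReal ENNReal

variable {μ : Measure X} [IsProbabilityMeasure μ]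
  {q : X → X → ℝ} {g : X → Y → ℝ} {ys : ℕ → Y} {n : ℕ}

set_option linter.unusedSectionVars false


variable {μ : Measure X} [IsProbabilityMeasure μ]
  {q : X → X → ℝ} {g : X → Y → ℝ} {ys : ℕ → Y} {n : ℕ}

lemma integrable_of_bdd {ρ : Measure X} [IsFiniteMeasure ρ] {φ : X → ℝ}
    (hm : Measurable φ) {C : ℝ} (h : ∀ x, |φ x| ≤ C) : Integrable φ ρ :=
  ⟨hm.aestronglyMeasurable, HasFiniteIntegral.of_bounded (C := C) (ae_of_all _ h)⟩

lemma LF_measurable (hq : Measurable (Function.uncurry q))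
    (hg : ∀ yv, Measurable fun x => g x yv) {f : (ℕ → X) → ℝ} (hf : Measurable f) :
    ∀ m, Measurable (LF μ q g ys n m f)
  | 0 => hf
  | (m + 1) => by
      have IH := LF_measurable hq hg hf m
      have hjoint : StronglyMeasurable fun p : (ℕ → X) × X =>
          g p.2 (ys (n - m)) * q (p.1 (n - m - 1)) p.2 *
            LF μ q g ys n m f (Function.update p.1 (n - m) p.2) := by
        refine Measurable.stronglyMeasurable ?_
        refine Measurable.mul (Measurable.mul ?_ ?_) ?_
        · exact (hg _).comp measurable_snd
        · show Measurable fun p : (ℕ → X) × X => Function.uncurry q (p.1 (n - m - 1), p.2)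
          exact hq.comp (Measurable.prodMk
            ((measurable_pi_apply _).comp measurable_fst) measurable_snd)
        · exact IH.comp measurable_update'
      exact hjoint.integral_prod_right'.measurable

lemma LF_bound (hσ : 0 ≤ σp) (hq_nonneg : ∀ a b, 0 ≤ q a b) (hq_up : ∀ a b, q a b ≤ σp)
    (hg_nonneg : ∀ x yv, 0 ≤ g x yv) (hg_bdd : ∀ yv, ∃ C, ∀ x, g x yv ≤ C)
    {f : (ℕ → X) → ℝ} {C : ℝ} (hf : ∀ x, |f x| ≤ C) :
    ∀ m, ∃ C', 0 ≤ C' ∧ ∀ x, |LF μ q g ys n m f x| ≤ C'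
  | 0 => ⟨max C 0, le_max_right _ _, fun x => (hf x).trans (le_max_left _ _)⟩
  | (m + 1) => by
      obtain ⟨C', hC', hb⟩ := LF_bound hσ hq_nonneg hq_up hg_nonneg hg_bdd hf m
      obtain ⟨Cg, hCg⟩ := hg_bdd (ys (n - m))
      refine ⟨max Cg 0 * σp * C', by positivity, fun x => ?_⟩
      show |∫ x', _ ∂μ| ≤ _
      have := norm_integral_le_of_norm_le_const (μ := μ)
        (f := fun x' => g x' (ys (n - m)) * q (x (n - m - 1)) x' *
          LF μ q g ys n m f (Function.update x (n - m) x'))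
        (C := max Cg 0 * σp * C') (ae_of_all _ fun x' => ?_)
      · simpa using this
      · rw [Real.norm_eq_abs, abs_mul, abs_mul]
        gcongr
        · rw [abs_of_nonneg (hg_nonneg _ _)]; exact (hCg x').trans (le_max_left _ _)
        · rw [abs_of_nonneg (hq_nonneg _ _)]; exact hq_up _ _
        · exact hb _


lemma LF_pos {σm σp : ℝ} (hσm : 0 < σm) (hσp : 0 ≤ σp) (hq_meas : Measurable (Function.uncurry q))
    (hq_low : ∀ a b, σm ≤ q a b) (hq_up : ∀ a b, q a b ≤ σp)
    (hg_meas : ∀ yv, Measurable fun x => g x yv)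
    (hg_nonneg : ∀ x yv, 0 ≤ g x yv) (hg_bdd : ∀ yv, ∃ C, ∀ x, g x yv ≤ C)
    (hg_pos : ∀ yv, 0 < ∫ x, g x yv ∂μ) :
    ∀ m, ∃ c, 0 < c ∧ ∀ x, c ≤ LF μ q g ys n m (fun _ => (1:ℝ)) x := by
  intro m
  induction m with
  | zero => exact ⟨1, one_pos, fun _ => le_refl _⟩
  | succ m IH => ?_
  obtain ⟨c, hc, hlow⟩ := IH
  have hq_nonneg : ∀ a b, 0 ≤ q a b := fun a b => le_trans hσm.le (hq_low a b)
  obtain ⟨C', hC', hb⟩ := LF_bound (μ := μ) (g := g) (ys := ys) (n := n) hσp hq_nonneg hq_up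
    hg_nonneg hg_bdd (f := fun _ => (1:ℝ)) (C := 1) (fun _ => by simp) m
  obtain ⟨Cg, hCg⟩ := hg_bdd (ys (n - m))
  refine ⟨(∫ z, g z (ys (n - m)) ∂μ) * σm * c,
    mul_pos (mul_pos (hg_pos _) hσm) hc, fun x => ?_⟩
  show _ ≤ ∫ x', g x' (ys (n - m)) * q (x (n - m - 1)) x' *
    LF μ q g ys n m (fun _ => (1:ℝ)) (Function.update x (n - m) x') ∂μ
  have hmeasG : Measurable fun x' => g x' (ys (n - m)) * q (x (n - m - 1)) x' *
      LF μ q g ys n m (fun _ => (1:ℝ)) (Function.update x (n - m) x') := by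
    refine ((hg_meas _).mul ?_).mul ?_
    · show Measurable fun x' => Function.uncurry q (x (n - m - 1), x')
      exact hq_meas.comp (measurable_const.prodMk measurable_id)
    · exact (LF_measurable hq_meas hg_meas measurable_const m).comp (measurable_update _)
  have hint_big : Integrable (fun x' => g x' (ys (n - m)) * q (x (n - m - 1)) x' *
      LF μ q g ys n m (fun _ => (1:ℝ)) (Function.update x (n - m) x')) μ := by
    refine integrable_of_bdd hmeasG (C := max Cg 0 * σp * C') fun x' => ?_
    rw [abs_mul, abs_mul]
    gcongr
    · rw [abs_of_nonneg (hg_nonneg _ _)]; exact (hCg x').trans (le_max_left _ _)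
    · rw [abs_of_nonneg (hq_nonneg _ _)]; exact hq_up _ _
    · exact hb _
  have hint_small : Integrable (fun x' => g x' (ys (n - m)) * σm * c) μ := by
    exact ((integrable_of_bdd (hg_meas _) (C := max Cg 0) fun x' => by
      rw [abs_of_nonneg (hg_nonneg _ _)]; exact (hCg x').trans (le_max_left _ _)).mul_const
      σm).mul_const c
  have hmono := integral_mono hint_small hint_big (fun x' => by
    have h1 := hq_low (x (n - m - 1)) x'
    have h2 := hlow (Function.update x (n - m) x')
    have h3 := hg_nonneg x' (ys (n - m))
    have h5 : σm * c ≤ q (x (n - m - 1)) x' *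
        LF μ q g ys n m (fun _ => (1:ℝ)) (Function.update x (n - m) x') :=
      mul_le_mul h1 h2 hc.le (le_trans hσm.le h1)
    calc g x' (ys (n - m)) * σm * c
        = g x' (ys (n - m)) * (σm * c) := by ring
      _ ≤ _ := by rw [mul_assoc]; exact mul_le_mul_of_nonneg_left h5 h3)
  calc (∫ z, g z (ys (n - m)) ∂μ) * σm * c
      = ∫ x', g x' (ys (n - m)) * σm * c ∂μ := by
        rw [integral_mul_const, integral_mul_const]
      _ ≤ _ := hmono

lemma LF_one_eq (hq_meas : Measurable (Function.uncurry q)) :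
    ∀ m, m ≤ n → ∀ x : ℕ → X, LF μ q g ys n m (fun _ => (1:ℝ)) x =
      LF μ q g ys n m (fun _ => (1:ℝ)) (fun _ => x (n - m))
  | 0, _, x => rfl
  | (m + 1), hm, x => by
      show (∫ x', _ ∂μ) = ∫ x', _ ∂μ
      refine integral_congr_ae (ae_of_all _ fun x' => ?_)
      have hne : n - m - 1 ≠ n - m := by omega
      have IH := LF_one_eq hq_meas m (by omega)
      simp only [Function.update_of_ne hne]
      rw [IH (Function.update x (n - m) x'),
        IH (Function.update (fun _ => x (n - (m + 1))) (n - m) x')]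
      simp only [Function.update_self]
      have : n - (m + 1) = n - m - 1 := by omega
      rw [this]

lemma LF_step (f : (ℕ → X) → ℝ) (k : ℕ) (hk : k + 1 ≤ n) (x : ℕ → X) :
    LF μ q g ys n (n - k) f x = ∫ x', g x' (ys (k + 1)) * q (x k) x' *
      LF μ q g ys n (n - (k + 1)) f (Function.update x (k + 1) x') ∂μ := by
  have h1 : n - k = (n - (k + 1)) + 1 := by omega
  rw [h1]
  show (∫ x', g x' (ys (n - (n - (k+1)))) * q (x (n - (n - (k+1)) - 1)) x' *
    LF μ q g ys n (n - (k+1)) f (Function.update x (n - (n - (k+1))) x') ∂μ) = _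
  simp only [show n - (n - (k+1)) = k + 1 from by omega, Nat.add_sub_cancel]



lemma integral_weight_transfer {ρ₁ ρ₂ : Measure X} {w₁ w₂ : X → ℝ}
    (hmw₁ : Measurable w₁) (hmw₂ : Measurable w₂)
    (hw₁ : ∀ x, 0 ≤ w₁ x) (hw₂ : ∀ x, 0 ≤ w₂ x)
    (h : ρ₁.withDensity (fun x => ENNReal.ofReal (w₁ x)) =
      ρ₂.withDensity (fun x => ENNReal.ofReal (w₂ x)))
    (ψ : X → ℝ) : ∫ x, w₁ x * ψ x ∂ρ₁ = ∫ x, w₂ x * ψ x ∂ρ₂ := by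
  have e₁ : ∫ x, ψ x ∂(ρ₁.withDensity fun x => ((Real.toNNReal (w₁ x) : ℝ≥0) : ℝ≥0∞)) =
      ∫ x, Real.toNNReal (w₁ x) • ψ x ∂ρ₁ :=
    integral_withDensity_eq_integral_smul hmw₁.real_toNNReal ψ
  have e₂ : ∫ x, ψ x ∂(ρ₂.withDensity fun x => ((Real.toNNReal (w₂ x) : ℝ≥0) : ℝ≥0∞)) =
      ∫ x, Real.toNNReal (w₂ x) • ψ x ∂ρ₂ :=
    integral_withDensity_eq_integral_smul hmw₂.real_toNNReal ψ
  have hd₁ : (fun x => ((Real.toNNReal (w₁ x) : ℝ≥0) : ℝ≥0∞)) =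
      fun x => ENNReal.ofReal (w₁ x) := rfl
  have hd₂ : (fun x => ((Real.toNNReal (w₂ x) : ℝ≥0) : ℝ≥0∞)) =
      fun x => ENNReal.ofReal (w₂ x) := rfl
  rw [hd₁] at e₁; rw [hd₂] at e₂
  have hs₁ : ∀ x, Real.toNNReal (w₁ x) • ψ x = w₁ x * ψ x := fun x => by
    simp [NNReal.smul_def, Real.coe_toNNReal _ (hw₁ x)]
  have hs₂ : ∀ x, Real.toNNReal (w₂ x) • ψ x = w₂ x * ψ x := fun x => by
    simp [NNReal.smul_def, Real.coe_toNNReal _ (hw₂ x)]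
  calc ∫ x, w₁ x * ψ x ∂ρ₁ = ∫ x, Real.toNNReal (w₁ x) • ψ x ∂ρ₁ := by simp_rw [hs₁]
    _ = ∫ x, ψ x ∂(ρ₁.withDensity fun x => ENNReal.ofReal (w₁ x)) := e₁.symm
    _ = ∫ x, ψ x ∂(ρ₂.withDensity fun x => ENNReal.ofReal (w₂ x)) := by rw [h]
    _ = ∫ x, Real.toNNReal (w₂ x) • ψ x ∂ρ₂ := e₂
    _ = ∫ x, w₂ x * ψ x ∂ρ₂ := by simp_rw [hs₂]

lemma Apart {ι : Type*} [Fintype ι] (h ψ w L F : ι → ℝ) (c D : ℝ) (hD : D ≠ 0)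
    (hL : ∀ i, L i ≠ 0) (hden : (∑ i, w i * L i) ≠ 0)
    (hh : ∀ i, h i = w i * L i / D) (hψ : ∀ i, ψ i = F i / L i - c) :
    (∑ i, h i * ψ i) / (∑ j, h j) = (∑ i, w i * F i) / (∑ i, w i * L i) - c := by
  have hnum : ∀ i, h i * ψ i = (w i * F i - c * (w i * L i)) / D := fun i => by
    rw [hh i, hψ i]; field_simp [hL i]
  rw [Finset.sum_congr rfl fun i _ => hnum i, Finset.sum_congr rfl fun i _ => hh i,
    ← Finset.sum_div, ← Finset.sum_div, Finset.sum_sub_distrib, ← Finset.mul_sum]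
  field_simp

lemma Bpart {ι : Type*} [Fintype ι] (w L F I : ι → ℝ) (c sw : ℝ) (hsw : sw ≠ 0)
    (hden : (∑ i, w i * L i) ≠ 0)
    (hI : ∀ j, I j = (F j - c * L j) / ((∑ i, w i * L i) / sw)) :
    ∑ j, (w j / sw) * I j = (∑ i, w i * F i) / (∑ i, w i * L i) - c := by
  have hterm : ∀ j, (w j / sw) * I j =
      (w j * F j - c * (w j * L j)) / (∑ i, w i * L i) := fun j => by
    rw [hI j]; field_simp
  rw [Finset.sum_congr rfl fun j _ => hterm j, ← Finset.sum_div, Finset.sum_sub_distrib,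
    ← Finset.mul_sum, sub_div, mul_div_assoc, div_self hden, mul_one]


lemma LmassEq (hq_meas : Measurable (Function.uncurry q)) {k : ℕ} (hk : k ≤ n) (x : ℕ → X) :
    LF μ q g ys n (n - k) (fun _ => (1:ℝ)) x = Lmass μ q g ys n k (x k) := by
  rw [LF_one_eq hq_meas (n - k) (Nat.sub_le n k) x]
  unfold Lmass
  rw [show n - (n - k) = k from by omega]

end auxlemmas

/-- Telescoping sequence: `auxT 0 = φ_{ν,0:n|n} f` and
`auxT (k+1)` is the self-normalized estimate `S_k(f)`. -/
def auxT (μ ν : Measure X) (q : X → X → ℝ) (g : X → Y → ℝ) (ys : ℕ → Y) (n : ℕ)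
    (W0 : X → ℝ) (W : ℕ → X → X → ℝ) (ξ : ℕ → Fin N → ℕ → X) (f : (ℕ → X) → ℝ) : ℕ → ℝ
  | 0 => smoothExp μ ν q g ys n f
  | (k+1) => (∑ i, partW W0 W ξ k i * LF μ q g ys n (n - k) f (ξ k i)) /
      (∑ i, partW W0 W ξ k i * LF μ q g ys n (n - k) (fun _ => (1:ℝ)) (ξ k i))

/-- **Lemma A.2.** Under (A1), with importance weights `W₀ = g(·,y₀) dν/dς` and
`W_{k+1}(x,·) = g(·,y_{k+1}) dQ(x,·)/dR_k(x,·)` (encoded by the `withDensity`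
identities below), strictly positive particle weights and bounded measurable
`f`, the particle approximation error decomposes as
`φ^N_{0:n|n} f − φ_{ν,0:n|n} f = Σ_{k=0}^n φ_k^N(f)`. -/
theorem particle_error_decomposition
    (μ ν ς : Measure X) [IsProbabilityMeasure μ] [IsProbabilityMeasure ν]
    [IsProbabilityMeasure ς]
    (q : X → X → ℝ) (g : X → Y → ℝ) (ys : ℕ → Y) (n : ℕ)
    (σm σp : ℝ)
    (hσm : 0 < σm)
    (hq_meas : Measurable (Function.uncurry q))
    (hq_low : ∀ a b, σm ≤ q a b) (hq_up : ∀ a b, q a b ≤ σp)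
    (hg_meas : ∀ yv, Measurable fun x => g x yv)
    (hg_nonneg : ∀ x yv, 0 ≤ g x yv)
    (hg_bdd : ∀ yv, ∃ C, ∀ x, g x yv ≤ C)
    (hg_pos : ∀ yv, 0 < ∫ x, g x yv ∂μ)
    (hνg_pos : 0 < ∫ x, g x (ys 0) ∂ν)
    (R : ℕ → Kernel X X) [∀ k, IsMarkovKernel (R k)]
    (W0 : X → ℝ) (hW0_meas : Measurable W0) (hW0_nonneg : ∀ x, 0 ≤ W0 x)
    (hW0 : ς.withDensity (fun x => ENNReal.ofReal (W0 x)) =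
      ν.withDensity fun x => ENNReal.ofReal (g x (ys 0)))
    (W : ℕ → X → X → ℝ) (hW_meas : ∀ k, Measurable (Function.uncurry (W k)))
    (hW_nonneg : ∀ k a b, 0 ≤ W k a b)
    (hW : ∀ k x, ((R k) x).withDensity (fun x' => ENNReal.ofReal (W (k + 1) x x')) =
      μ.withDensity fun x' => ENNReal.ofReal (q x x' * g x' (ys (k + 1))))
    (hN : 1 ≤ N)
    (ξ : ℕ → Fin N → ℕ → X) (xhat : ℕ → ℕ → X)
    (hw_pos : ∀ k i, 0 < partW W0 W ξ k i)
    (f : (ℕ → X) → ℝ) (hf_meas : Measurable f) (hf_bdd : ∃ C, ∀ x, |f x| ≤ C) :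
    partMeas W0 W ξ n f - smoothExp μ ν q g ys n f =
      ∑ k ∈ Finset.range (n + 1), phiK μ ν ς q g ys n W0 W R ξ xhat k f := by
  classical
  obtain ⟨Cf, hCf⟩ := hf_bdd
  have hq_nonneg : ∀ a b, 0 ≤ q a b := fun a b => le_trans hσm.le (hq_low a b)
  have hσp0 : 0 ≤ σp :=
    le_trans (hq_nonneg (ξ 0 ⟨0, hN⟩ 0) (ξ 0 ⟨0, hN⟩ 0)) (hq_up _ _)
  have hLmeas_f : ∀ m, Measurable (LF μ q g ys n m f) :=
    LF_measurable hq_meas hg_meas hf_meas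
  have hLmeas_1 : ∀ m, Measurable (LF μ q g ys n m (fun _ => (1:ℝ))) :=
    LF_measurable hq_meas hg_meas measurable_const
  have hLbdd_f : ∀ m, ∃ C', 0 ≤ C' ∧ ∀ x, |LF μ q g ys n m f x| ≤ C' :=
    LF_bound (μ := μ) (g := g) (ys := ys) (n := n) hσp0 hq_nonneg hq_up hg_nonneg hg_bdd hCf
  have hLbdd_1 : ∀ m, ∃ C', 0 ≤ C' ∧ ∀ x, |LF μ q g ys n m (fun _ => (1:ℝ)) x| ≤ C' :=
    LF_bound (μ := μ) (g := g) (ys := ys) (n := n) hσp0 hq_nonneg hq_up hg_nonneg hg_bdd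
      (C := 1) (fun _ => by simp)
  have hLpos : ∀ m x, 0 < LF μ q g ys n m (fun _ => (1:ℝ)) x := by
    intro m x
    obtain ⟨c, hc, hl⟩ := LF_pos (μ := μ) (g := g) (ys := ys) (n := n) hσm hσp0 hq_meas hq_low
      hq_up hg_meas hg_nonneg hg_bdd hg_pos m
    exact hc.trans_le (hl x)
  have hLm_pos : ∀ k z, 0 < Lmass μ q g ys n k z := fun k z => hLpos _ _
  have huniv : (Finset.univ : Finset (Fin N)).Nonempty := ⟨⟨0, hN⟩, Finset.mem_univ _⟩
  have hsw_pos : ∀ k, 0 < ∑ i, partW W0 W ξ k i :=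
    fun k => Finset.sum_pos (fun i _ => hw_pos k i) huniv
  have hSdenL_pos : ∀ k, 0 < ∑ i, partW W0 W ξ k i * Lmass μ q g ys n k (ξ k i k) :=
    fun k => Finset.sum_pos (fun i _ => mul_pos (hw_pos k i) (hLm_pos _ _)) huniv
  have hSden_pos : ∀ k, 0 < ∑ i, partW W0 W ξ k i *
      LF μ q g ys n (n - k) (fun _ => (1:ℝ)) (ξ k i) :=
    fun k => Finset.sum_pos (fun i _ => mul_pos (hw_pos k i) (hLpos _ _)) huniv
  -- generic integrability over μ
  have hIntμ : ∀ (a : X) (x : ℕ → X) (jj : ℕ) (f' : (ℕ → X) → ℝ) (yv : Y) (m : ℕ),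
      Measurable f' → (∃ C', 0 ≤ C' ∧ ∀ z, |LF μ q g ys n m f' z| ≤ C') →
      Integrable (fun x' => g x' yv * q a x' *
        LF μ q g ys n m f' (Function.update x jj x')) μ := by
    intro a x jj f' yv m hfm hCb
    obtain ⟨C', hC', hb⟩ := hCb
    obtain ⟨Cg, hCg⟩ := hg_bdd yv
    refine integrable_of_bdd ?_ (C := max Cg 0 * σp * C') fun x' => ?_
    · refine ((hg_meas yv).mul ?_).mul
        ((LF_measurable hq_meas hg_meas hfm m).comp (measurable_update _))
      show Measurable fun x' => Function.uncurry q (a, x')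
      exact hq_meas.comp (measurable_const.prodMk measurable_id)
    · rw [abs_mul, abs_mul]
      gcongr
      · rw [abs_of_nonneg (hg_nonneg _ _)]; exact (hCg x').trans (le_max_left _ _)
      · rw [abs_of_nonneg (hq_nonneg _ _)]; exact hq_up _ _
      · exact hb _
  -- the per-step identity
  have hstep : ∀ k, k ≤ n → phiK μ ν ς q g ys n W0 W R ξ xhat k f =
      auxT μ ν q g ys n W0 W ξ f (k + 1) - auxT μ ν q g ys n W0 W ξ f k := by
    intro k hkn
    cases k with
    | zero =>
      obtain ⟨c0, hc0, hl0⟩ := LF_pos (μ := μ) (g := g) (ys := ys) (n := n) hσm hσp0 hq_meas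
        hq_low hq_up hg_meas hg_nonneg hg_bdd hg_pos n
      obtain ⟨CL, hCL, hbL⟩ := hLbdd_1 n
      obtain ⟨CLf, hCLf, hbLf⟩ := hLbdd_f n
      obtain ⟨Cg, hCg⟩ := hg_bdd (ys 0)
      have hgint : Integrable (fun z => g z (ys 0)) ν :=
        integrable_of_bdd (hg_meas _) (C := max Cg 0) (fun z => by
          rw [abs_of_nonneg (hg_nonneg _ _)]; exact (hCg z).trans (le_max_left _ _))
      have hintν : ∀ (m : ℕ) (f' : (ℕ → X) → ℝ), Measurable f' → ∀ (C' : ℝ),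
          (∀ z, |LF μ q g ys n m f' z| ≤ C') →
          Integrable (fun z => g z (ys 0) * LF μ q g ys n m f' (fun _ => z)) ν := by
        intro m f' hfm C' hb
        refine integrable_of_bdd ((hg_meas _).mul ((LF_measurable hq_meas hg_meas hfm m).comp
          (measurable_pi_lambda _ fun _ => measurable_id))) (C := max Cg 0 * max C' 0)
          fun z => ?_
        rw [abs_mul]
        gcongr
        · rw [abs_of_nonneg (hg_nonneg _ _)]; exact (hCg z).trans (le_max_left _ _)
        · exact (hb _).trans (le_max_left _ _)
      have hKpos : 0 < ∫ z, g z (ys 0) * Lmass μ q g ys n 0 z ∂ν := by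
        have h2 : (∫ z, g z (ys 0) ∂ν) * c0 ≤ ∫ z, g z (ys 0) * Lmass μ q g ys n 0 z ∂ν := by
          rw [← integral_mul_const]
          exact integral_mono (hgint.mul_const c0)
            (hintν n (fun _ => (1:ℝ)) measurable_const CL hbL)
            (fun z => mul_le_mul_of_nonneg_left (hl0 _) (hg_nonneg _ _))
        nlinarith [mul_pos hνg_pos hc0]
      have hKne : (∫ z, g z (ys 0) * Lmass μ q g ys n 0 z ∂ν) ≠ 0 := hKpos.ne'
      -- the A part
      have hA : (∑ i, hfun μ ν q g ys n W0 W ξ 0 (ξ 0 i) *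
            Psi μ q g ys n 0 (xhat 0) f (ξ 0 i)) /
          (∑ j, hfun μ ν q g ys n W0 W ξ 0 (ξ 0 j)) =
          (∑ i, partW W0 W ξ 0 i * LF μ q g ys n (n - 0) f (ξ 0 i)) /
            (∑ i, partW W0 W ξ 0 i * Lmass μ q g ys n 0 (ξ 0 i 0)) -
          LF μ q g ys n (n - 0) f (xhat 0) /
            LF μ q g ys n (n - 0) (fun _ => (1:ℝ)) (xhat 0) := by
        refine Apart _ _ _ _ _ _ _ hKne (fun i => (hLm_pos 0 _).ne') (hSdenL_pos 0).ne'
          (fun i => rfl) (fun i => ?_)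
        show Psi μ q g ys n 0 (xhat 0) f (ξ 0 i) = _
        unfold Psi
        rw [LmassEq hq_meas (Nat.zero_le n) (ξ 0 i)]
      -- the B part
      have hB : (∫ x₀, hfun μ ν q g ys n W0 W ξ 0 (fun _ => x₀) *
            Psi μ q g ys n 0 (xhat 0) f (fun _ => x₀) ∂ς) =
          smoothExp μ ν q g ys n f -
          LF μ q g ys n (n - 0) f (xhat 0) /
            LF μ q g ys n (n - 0) (fun _ => (1:ℝ)) (xhat 0) := by
        have e1 : (∫ x₀, hfun μ ν q g ys n W0 W ξ 0 (fun _ => x₀) *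
              Psi μ q g ys n 0 (xhat 0) f (fun _ => x₀) ∂ς) =
            ∫ x₀, W0 x₀ * ((Lmass μ q g ys n 0 x₀ /
              (∫ z, g z (ys 0) * Lmass μ q g ys n 0 z ∂ν)) *
              Psi μ q g ys n 0 (xhat 0) f (fun _ => x₀)) ∂ς := by
          refine integral_congr_ae (ae_of_all _ fun x₀ => ?_)
          show W0 x₀ * Lmass μ q g ys n 0 x₀ /
              (∫ z, g z (ys 0) * Lmass μ q g ys n 0 z ∂ν) * _ = _
          ring
        have e2 : (∫ x₀, W0 x₀ * ((Lmass μ q g ys n 0 x₀ /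
              (∫ z, g z (ys 0) * Lmass μ q g ys n 0 z ∂ν)) *
              Psi μ q g ys n 0 (xhat 0) f (fun _ => x₀)) ∂ς) =
            ∫ x₀, g x₀ (ys 0) * ((Lmass μ q g ys n 0 x₀ /
              (∫ z, g z (ys 0) * Lmass μ q g ys n 0 z ∂ν)) *
              Psi μ q g ys n 0 (xhat 0) f (fun _ => x₀)) ∂ν :=
          integral_weight_transfer hW0_meas (hg_meas _) hW0_nonneg
            (fun x => hg_nonneg _ _) hW0 _
        have e3 : ∀ x₀, g x₀ (ys 0) * ((Lmass μ q g ys n 0 x₀ /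
              (∫ z, g z (ys 0) * Lmass μ q g ys n 0 z ∂ν)) *
              Psi μ q g ys n 0 (xhat 0) f (fun _ => x₀)) =
            (g x₀ (ys 0) * LF μ q g ys n (n - 0) f (fun _ => x₀) -
              (LF μ q g ys n (n - 0) f (xhat 0) /
                LF μ q g ys n (n - 0) (fun _ => (1:ℝ)) (xhat 0)) *
              (g x₀ (ys 0) * LF μ q g ys n (n - 0) (fun _ => (1:ℝ)) (fun _ => x₀))) /
            (∫ z, g z (ys 0) * Lmass μ q g ys n 0 z ∂ν) := by
          intro x₀
          rw [show Lmass μ q g ys n 0 x₀ =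
            LF μ q g ys n (n - 0) (fun _ => (1:ℝ)) (fun _ => x₀) from rfl]
          unfold Psi
          simp only [Nat.sub_zero]
          field_simp [(hLpos n (fun _ => x₀)).ne', hKne]
        rw [e1, e2, integral_congr_ae (ae_of_all _ e3), integral_div,
          integral_sub (hintν (n - 0) f hf_meas CLf hbLf)
            ((hintν (n - 0) (fun _ => (1:ℝ)) measurable_const CL hbL).const_mul _),
          integral_const_mul]
        rw [show (∫ x₀, g x₀ (ys 0) *
            LF μ q g ys n (n - 0) (fun _ => (1:ℝ)) (fun _ => x₀) ∂ν) =
            (∫ z, g z (ys 0) * Lmass μ q g ys n 0 z ∂ν) from rfl]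
        rw [show (∫ x₀, g x₀ (ys 0) * LF μ q g ys n (n - 0) f (fun _ => x₀) ∂ν) =
            (∫ x₀, g x₀ (ys 0) * LF μ q g ys n n f (fun _ => x₀) ∂ν) from rfl]
        unfold smoothExp
        rw [show (∫ x₀, g x₀ (ys 0) *
            LF μ q g ys n n (fun _ => (1:ℝ)) (fun _ => x₀) ∂ν) =
            (∫ z, g z (ys 0) * Lmass μ q g ys n 0 z ∂ν) from rfl]
        rw [sub_div, mul_div_assoc, div_self hKne, mul_one]
      show _ - _ = _ - _
      rw [hA, hB]
      have hconv : (∑ i, partW W0 W ξ 0 i * Lmass μ q g ys n 0 (ξ 0 i 0)) =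
          ∑ i, partW W0 W ξ 0 i * LF μ q g ys n (n - 0) (fun _ => (1:ℝ)) (ξ 0 i) :=
        Finset.sum_congr rfl fun i _ => by
          rw [LmassEq hq_meas (Nat.zero_le n) (ξ 0 i)]
      rw [hconv]
      show _ = (∑ i, partW W0 W ξ 0 i * LF μ q g ys n (n - 0) f (ξ 0 i)) /
          (∑ i, partW W0 W ξ 0 i * LF μ q g ys n (n - 0) (fun _ => (1:ℝ)) (ξ 0 i)) -
          smoothExp μ ν q g ys n f
      ring
    | succ k =>
      have hk1 : k + 1 ≤ n := hkn
      have hkle : k ≤ n := by omega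
      have hDpos : 0 < partMeas W0 W ξ k (fun xp => Lmass μ q g ys n k (xp k)) := by
        have : partMeas W0 W ξ k (fun xp => Lmass μ q g ys n k (xp k)) =
            (∑ i, partW W0 W ξ k i * Lmass μ q g ys n k (ξ k i k)) /
              ∑ i, partW W0 W ξ k i := rfl
        rw [this]
        exact div_pos (hSdenL_pos k) (hsw_pos k)
      have hDne := hDpos.ne'
      -- the A part
      have hA : (∑ i, hfun μ ν q g ys n W0 W ξ (k + 1) (ξ (k + 1) i) *
            Psi μ q g ys n (k + 1) (xhat (k + 1)) f (ξ (k + 1) i)) /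
          (∑ j, hfun μ ν q g ys n W0 W ξ (k + 1) (ξ (k + 1) j)) =
          (∑ i, partW W0 W ξ (k + 1) i * LF μ q g ys n (n - (k + 1)) f (ξ (k + 1) i)) /
            (∑ i, partW W0 W ξ (k + 1) i * Lmass μ q g ys n (k + 1) (ξ (k + 1) i (k + 1))) -
          LF μ q g ys n (n - (k + 1)) f (xhat (k + 1)) /
            LF μ q g ys n (n - (k + 1)) (fun _ => (1:ℝ)) (xhat (k + 1)) := by
        refine Apart _ _ _ _ _ _ _ hDne (fun i => (hLm_pos (k + 1) _).ne')
          (hSdenL_pos (k + 1)).ne' (fun i => rfl) (fun i => ?_)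
        show Psi μ q g ys n (k + 1) (xhat (k + 1)) f (ξ (k + 1) i) = _
        unfold Psi
        rw [LmassEq hq_meas hk1 (ξ (k + 1) i)]
      -- the B part : per particle integral
      have hI : ∀ j : Fin N,
          (∫ x', hfun μ ν q g ys n W0 W ξ (k + 1) (Function.update (ξ k j) (k + 1) x') *
            Psi μ q g ys n (k + 1) (xhat (k + 1)) f (Function.update (ξ k j) (k + 1) x')
            ∂(R k (ξ k j k))) =
          (LF μ q g ys n (n - k) f (ξ k j) -
            (LF μ q g ys n (n - (k + 1)) f (xhat (k + 1)) /
              LF μ q g ys n (n - (k + 1)) (fun _ => (1:ℝ)) (xhat (k + 1))) *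
            Lmass μ q g ys n k (ξ k j k)) /
          partMeas W0 W ξ k (fun xp => Lmass μ q g ys n k (xp k)) := by
        intro j
        have hupk : ∀ x' : X, Function.update (ξ k j) (k + 1) x' k = ξ k j k :=
          fun x' => Function.update_of_ne (by omega) _ _
        have hupk1 : ∀ x' : X, Function.update (ξ k j) (k + 1) x' (k + 1) = x' :=
          fun x' => Function.update_self _ _ _
        have e1 : (∫ x', hfun μ ν q g ys n W0 W ξ (k + 1)
              (Function.update (ξ k j) (k + 1) x') *
              Psi μ q g ys n (k + 1) (xhat (k + 1)) f (Function.update (ξ k j) (k + 1) x')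
              ∂(R k (ξ k j k))) =
            ∫ x', W (k + 1) (ξ k j k) x' * ((Lmass μ q g ys n (k + 1) x' /
              partMeas W0 W ξ k (fun xp => Lmass μ q g ys n k (xp k))) *
              Psi μ q g ys n (k + 1) (xhat (k + 1)) f (Function.update (ξ k j) (k + 1) x'))
              ∂(R k (ξ k j k)) := by
          refine integral_congr_ae (ae_of_all _ fun x' => ?_)
          show W (k + 1) (Function.update (ξ k j) (k + 1) x' k)
              (Function.update (ξ k j) (k + 1) x' (k + 1)) *
              Lmass μ q g ys n (k + 1) (Function.update (ξ k j) (k + 1) x' (k + 1)) /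
              partMeas W0 W ξ k (fun xp => Lmass μ q g ys n k (xp k)) * _ = _
          rw [hupk x', hupk1 x']
          ring
        have e2 : (∫ x', W (k + 1) (ξ k j k) x' * ((Lmass μ q g ys n (k + 1) x' /
              partMeas W0 W ξ k (fun xp => Lmass μ q g ys n k (xp k))) *
              Psi μ q g ys n (k + 1) (xhat (k + 1)) f (Function.update (ξ k j) (k + 1) x'))
              ∂(R k (ξ k j k))) =
            ∫ x', (q (ξ k j k) x' * g x' (ys (k + 1))) * ((Lmass μ q g ys n (k + 1) x' /
              partMeas W0 W ξ k (fun xp => Lmass μ q g ys n k (xp k))) *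
              Psi μ q g ys n (k + 1) (xhat (k + 1)) f (Function.update (ξ k j) (k + 1) x'))
              ∂μ := by
          refine integral_weight_transfer ?_ ?_ (fun x' => hW_nonneg _ _ _)
            (fun x' => mul_nonneg (hq_nonneg _ _) (hg_nonneg _ _)) (hW k (ξ k j k)) _
          · show Measurable fun x' => Function.uncurry (W (k + 1)) (ξ k j k, x')
            exact (hW_meas (k + 1)).comp (measurable_const.prodMk measurable_id)
          · refine Measurable.mul ?_ (hg_meas _)
            show Measurable fun x' => Function.uncurry q (ξ k j k, x')
            exact hq_meas.comp (measurable_const.prodMk measurable_id)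
        have e3 : ∀ x', (q (ξ k j k) x' * g x' (ys (k + 1))) * ((Lmass μ q g ys n (k + 1) x' /
              partMeas W0 W ξ k (fun xp => Lmass μ q g ys n k (xp k))) *
              Psi μ q g ys n (k + 1) (xhat (k + 1)) f (Function.update (ξ k j) (k + 1) x')) =
            (g x' (ys (k + 1)) * q (ξ k j k) x' *
              LF μ q g ys n (n - (k + 1)) f (Function.update (ξ k j) (k + 1) x') -
              (LF μ q g ys n (n - (k + 1)) f (xhat (k + 1)) /
                LF μ q g ys n (n - (k + 1)) (fun _ => (1:ℝ)) (xhat (k + 1))) *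
              (g x' (ys (k + 1)) * q (ξ k j k) x' *
                LF μ q g ys n (n - (k + 1)) (fun _ => (1:ℝ))
                  (Function.update (ξ k j) (k + 1) x'))) /
            partMeas W0 W ξ k (fun xp => Lmass μ q g ys n k (xp k)) := by
          intro x'
          have hL1 : LF μ q g ys n (n - (k + 1)) (fun _ => (1:ℝ))
              (Function.update (ξ k j) (k + 1) x') = Lmass μ q g ys n (k + 1) x' := by
            rw [LmassEq hq_meas hk1, hupk1 x']
          unfold Psi
          rw [hL1]
          field_simp [(hLm_pos (k + 1) x').ne', hDne]
        rw [e1, e2, integral_congr_ae (ae_of_all _ e3), integral_div,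
          integral_sub (hIntμ _ _ _ f _ _ hf_meas (hLbdd_f _))
            ((hIntμ _ _ _ (fun _ => (1:ℝ)) _ _ measurable_const (hLbdd_1 _)).const_mul _),
          integral_const_mul, ← LF_step f k hk1 (ξ k j),
          ← LF_step (fun _ => (1:ℝ)) k hk1 (ξ k j), LmassEq hq_meas hkle (ξ k j)]
      -- assemble the B part
      have hB : (∑ j, (partW W0 W ξ k j / ∑ j', partW W0 W ξ k j') *
            ∫ x', hfun μ ν q g ys n W0 W ξ (k + 1) (Function.update (ξ k j) (k + 1) x') *
              Psi μ q g ys n (k + 1) (xhat (k + 1)) f (Function.update (ξ k j) (k + 1) x')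
              ∂(R k (ξ k j k))) =
          (∑ i, partW W0 W ξ k i * LF μ q g ys n (n - k) f (ξ k i)) /
            (∑ i, partW W0 W ξ k i * Lmass μ q g ys n k (ξ k i k)) -
          LF μ q g ys n (n - (k + 1)) f (xhat (k + 1)) /
            LF μ q g ys n (n - (k + 1)) (fun _ => (1:ℝ)) (xhat (k + 1)) := by
        refine Bpart (partW W0 W ξ k) (fun i => Lmass μ q g ys n k (ξ k i k))
          (fun i => LF μ q g ys n (n - k) f (ξ k i)) _ _ _ (hsw_pos k).ne'
          (hSdenL_pos k).ne' (fun j => ?_)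
        rw [hI j]
        rfl
      show _ - _ = _ - _
      rw [hA, hB]
      have hconv1 : (∑ i, partW W0 W ξ (k + 1) i *
            Lmass μ q g ys n (k + 1) (ξ (k + 1) i (k + 1))) =
          ∑ i, partW W0 W ξ (k + 1) i *
            LF μ q g ys n (n - (k + 1)) (fun _ => (1:ℝ)) (ξ (k + 1) i) :=
        Finset.sum_congr rfl fun i _ => by rw [LmassEq hq_meas hk1 (ξ (k + 1) i)]
      have hconv2 : (∑ i, partW W0 W ξ k i * Lmass μ q g ys n k (ξ k i k)) =
          ∑ i, partW W0 W ξ k i * LF μ q g ys n (n - k) (fun _ => (1:ℝ)) (ξ k i) :=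
        Finset.sum_congr rfl fun i _ => by rw [LmassEq hq_meas hkle (ξ k i)]
      rw [hconv1, hconv2]
      show _ = (∑ i, partW W0 W ξ (k + 1) i * LF μ q g ys n (n - (k + 1)) f (ξ (k + 1) i)) /
          (∑ i, partW W0 W ξ (k + 1) i *
            LF μ q g ys n (n - (k + 1)) (fun _ => (1:ℝ)) (ξ (k + 1) i)) -
          (∑ i, partW W0 W ξ k i * LF μ q g ys n (n - k) f (ξ k i)) /
            (∑ i, partW W0 W ξ k i * LF μ q g ys n (n - k) (fun _ => (1:ℝ)) (ξ k i))
      ring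
  -- telescoping
  have hTn : auxT μ ν q g ys n W0 W ξ f (n + 1) = partMeas W0 W ξ n f := by
    show (∑ i, partW W0 W ξ n i * LF μ q g ys n (n - n) f (ξ n i)) /
        (∑ i, partW W0 W ξ n i * LF μ q g ys n (n - n) (fun _ => (1:ℝ)) (ξ n i)) = _
    simp only [Nat.sub_self]
    simp [LF, partMeas]
  calc partMeas W0 W ξ n f - smoothExp μ ν q g ys n f
      = auxT μ ν q g ys n W0 W ξ f (n + 1) - auxT μ ν q g ys n W0 W ξ f 0 := by
        rw [hTn]; rfl
    _ = ∑ k ∈ Finset.range (n + 1), (auxT μ ν q g ys n W0 W ξ f (k + 1) -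
          auxT μ ν q g ys n W0 W ξ f k) :=
        (Finset.sum_range_sub (auxT μ ν q g ys n W0 W ξ f) (n + 1)).symm
    _ = ∑ k ∈ Finset.range (n + 1), phiK μ ν ς q g ys n W0 W R ξ xhat k f :=
        Finset.sum_congr rfl fun k hkm =>
          (hstep k (Nat.lt_succ_iff.mp (Finset.mem_range.mp hkm))).symm


end
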